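/- arXiv:1906.01200 — 2 statements merged into one kernel-verified Lean document; each statement's English description precedes it below -/
import Mathlib

section
/- Let M, N, A, G be real n×n matrices with A = M − N, where M is an invertible diagonal matrix and G is a diagonal matrix whose diagonal entries are each 0 or 1. Let f, b ∈ ℝⁿ. If u* ∈ ℝⁿ is a fixed point of the update u ↦ G·(M⁻¹·N·u + M⁻¹·f) + (I − G)·b, i.e., u* = G·(M⁻¹·N·u* + M⁻¹·f) + (I − G)·b, then u* satisfies G·(A·u*) = G·f and (I − G)·u* = (I − G)·b. -/
/-!
A diagonal 0–1 matrix `G` is an idempotent commuting with the diagonal `M`. Multiplying the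
fixed-point equation by `1 - G` kills its `G`-term, which gives the boundary condition.
Multiplying it by `G` kills the `(1 - G)`-term and leaves `G u = G M⁻¹ (N u + f)`; moving `G`
past `M` turns this into `G M u = G (N u + f)`, i.e. `G (M - N) u = G f`.
-/

open Matrix

namespace IsIdempotentElem

variable {ι R : Type*} [Fintype ι] [DecidableEq ι] [Ring R] {G : Matrix ι ι R}

theorem mulVec_add_one_sub_mulVec (hG : IsIdempotentElem G) (x b : ι → R) :
    G *ᵥ (G *ᵥ x + (1 - G) *ᵥ b) = G *ᵥ x := by
  rw [mulVec_add, mulVec_mulVec, mulVec_mulVec, hG.eq, hG.mul_one_sub_self, zero_mulVec,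
    add_zero]

theorem one_sub_mulVec_add_one_sub_mulVec (hG : IsIdempotentElem G)
    (x b : ι → R) : (1 - G) *ᵥ (G *ᵥ x + (1 - G) *ᵥ b) = (1 - G) *ᵥ b := by
  rw [mulVec_add, mulVec_mulVec, mulVec_mulVec, hG.one_sub_mul_self, hG.one_sub.eq,
    zero_mulVec, zero_add]

end IsIdempotentElem

namespace Matrix

variable {ι R : Type*} [Fintype ι] [DecidableEq ι]

theorem IsDiag.commute [CommSemiring R] {A B : Matrix ι ι R} (hA : A.IsDiag) (hB : B.IsDiag) :
    Commute A B :=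
  hA.diagonal_diag ▸ hB.diagonal_diag ▸ commute_diagonal _ _

theorem IsDiag.isIdempotentElem [Semiring R] {G : Matrix ι ι R} (hG : G.IsDiag)
    (hdiag : ∀ i, IsIdempotentElem (G i i)) : IsIdempotentElem G := by
  rw [← hG.diagonal_diag, IsIdempotentElem, diagonal_mul_diagonal]
  exact congrArg diagonal (funext hdiag)

section ResetIteration

variable [CommRing R] {M N G : Matrix ι ι R} {f b u : ι → R}

def IsResetFixedPoint (M N G : Matrix ι ι R) (f b u : ι → R) : Prop :=
  u = G *ᵥ (M⁻¹ *ᵥ (N *ᵥ u) + M⁻¹ *ᵥ f) + (1 - G) *ᵥ b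

theorem IsResetFixedPoint.one_sub_mulVec_eq (hG : IsIdempotentElem G)
    (hu : IsResetFixedPoint M N G f b u) : (1 - G) *ᵥ u = (1 - G) *ᵥ b := by
  conv_lhs => rw [hu]
  exact hG.one_sub_mulVec_add_one_sub_mulVec _ b

theorem IsResetFixedPoint.mulVec_sub_mulVec_eq (hG : IsIdempotentElem G) (hMG : Commute M G)
    (hM : IsUnit M) (hu : IsResetFixedPoint M N G f b u) :
    G *ᵥ ((M - N) *ᵥ u) = G *ᵥ f := by
  set y := N *ᵥ u + f
  have hGu : G *ᵥ u = G *ᵥ (M⁻¹ *ᵥ y) := by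
    conv_lhs => rw [hu]
    rw [hG.mulVec_add_one_sub_mulVec, ← mulVec_add]
  have hGMu : G *ᵥ (M *ᵥ u) = G *ᵥ y :=
    calc G *ᵥ (M *ᵥ u) = M *ᵥ (G *ᵥ u) := by rw [mulVec_mulVec, mulVec_mulVec, hMG.eq]
      _ = G *ᵥ ((M * M⁻¹) *ᵥ y) := by
        rw [hGu, mulVec_mulVec, mulVec_mulVec, mulVec_mulVec, ← mul_assoc, hMG.eq, mul_assoc]
      _ = G *ᵥ y := by rw [mul_nonsing_inv M ((isUnit_iff_isUnit_det M).mp hM), one_mulVec]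
  rw [sub_mulVec, mulVec_sub, hGMu, mulVec_add, add_sub_cancel_left]

end ResetIteration

end Matrix

/-- Matrix-splitting fixed point proposition: if `A = M - N` with `M` an invertible
diagonal matrix and `G` a diagonal 0-1 "reset" matrix, then any fixed point `u*` of
`u ↦ G·(M⁻¹·N·u + M⁻¹·f) + (I − G)·b` satisfies `G·(A·u*) = G·f` and
`(I − G)·u* = (I − G)·b`. -/
theorem matrix_splitting_fixed_point_solves_pde
    {n : ℕ} (M N A G : Matrix (Fin n) (Fin n) ℝ)
    (hA : A = M - N)
    (hMdiag : M.IsDiag) (hMunit : IsUnit M)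
    (hGdiag : G.IsDiag) (hG01 : ∀ i, G i i = 0 ∨ G i i = 1)
    (f b uStar : Fin n → ℝ)
    (hfix : uStar =
      G.mulVec (M⁻¹.mulVec (N.mulVec uStar) + M⁻¹.mulVec f) + (1 - G).mulVec b) :
    G.mulVec (A.mulVec uStar) = G.mulVec f ∧
    (1 - G).mulVec uStar = (1 - G).mulVec b := by
  have hG : IsIdempotentElem G :=
    hGdiag.isIdempotentElem fun i => IsIdempotentElem.iff_eq_zero_or_one.mpr (hG01 i)
  have hu : IsResetFixedPoint M N G f b uStar := hfix
  subst hA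
  exact ⟨hu.mulVec_sub_mulVec_eq hG (hMdiag.commute hGdiag) hMunit, hu.one_sub_mulVec_eq hG⟩
end

section
/- Let T, G be real n×n matrices, c ∈ ℝⁿ, with ρ(T) < 1, and let u* ∈ ℝⁿ be the fixed point satisfying u* = T·u* + c. Let Ψ(u) = T·u + c and Φ_H(u) = Ψ(u) + G·H·(Ψ(u) − u). If the matrix H satisfies G·H = T·(I − T)⁻¹, then Φ_H(u) = u* for every u ∈ ℝⁿ; that is, the learned iterator converges to the solution in a single iteration. -/
open Matrix Filter Topology

/-- The spectral radius of a real square matrix: the supremum of the moduli of its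
(complex) eigenvalues, i.e. the spectral radius of the matrix viewed over `ℂ`. -/
noncomputable def specRad {n : ℕ} (T : Matrix (Fin n) (Fin n) ℝ) : ENNReal :=
  spectralRadius ℂ (T.map (algebraMap ℝ ℂ))

/-- If `ρ(T) < 1`, `u* = T·u* + c`, and `G·H = T·(I − T)⁻¹`, then the learned
iterator `Φ_H(u) = Ψ(u) + G·H·(Ψ(u) − u)` with `Ψ(u) = T·u + c` hits the solution
`u*` in a single iteration from any `u`. -/
theorem learned_iterator_one_step_convergence_of_perfect_correction
    {n : ℕ} (T G H : Matrix (Fin n) (Fin n) ℝ) (c : Fin n → ℝ)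
    (hρ : specRad T < 1)
    (uStar : Fin n → ℝ) (hfix : uStar = T.mulVec uStar + c)
    (hGH : G * H = T * (1 - T)⁻¹) :
    ∀ u : Fin n → ℝ,
      (T.mulVec u + c) + (G * H).mulVec ((T.mulVec u + c) - u) = uStar := by
  intro u
  -- First, `1 - T` is invertible since `ρ(T) < 1`.
  set M : Matrix (Fin n) (Fin n) ℂ := T.map (algebraMap ℝ ℂ) with hM
  have hres : (1 : ℂ) ∈ resolventSet ℂ M := by
    by_contra hn
    have hmem : (1 : ℂ) ∈ spectrum ℂ M := hn
    have hle : (‖(1 : ℂ)‖₊ : ENNReal) ≤ spectralRadius ℂ M :=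
      le_iSup₂ (α := ENNReal) (1 : ℂ) hmem
    have : (1 : ENNReal) ≤ specRad T := by rw [specRad, ← hM]; simpa using hle
    exact hρ.not_ge this
  have hUnitC : IsUnit ((1 : Matrix (Fin n) (Fin n) ℂ) - M) := by
    simpa [resolventSet] using hres
  have hdetC : ((1 : Matrix (Fin n) (Fin n) ℂ) - M).det ≠ 0 :=
    ((Matrix.isUnit_iff_isUnit_det _).mp hUnitC).ne_zero
  have hmap : (1 : Matrix (Fin n) (Fin n) ℂ) - M =
      (algebraMap ℝ ℂ).mapMatrix (1 - T) := by
    simp [hM, Matrix.map_sub, RingHom.mapMatrix_apply]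
  have hdet : IsUnit (1 - T).det := by
    rw [isUnit_iff_ne_zero]
    intro h0
    apply hdetC
    rw [hmap, ← RingHom.map_det, h0, map_zero]
  have hinv' : (1 - T)⁻¹ * (1 - T) = 1 := Matrix.nonsing_inv_mul _ hdet
  -- `uStar = (1 - T)⁻¹ ⬝ c`
  have hc : (1 - T).mulVec uStar = c := by
    rw [Matrix.sub_mulVec, Matrix.one_mulVec]
    nth_rewrite 1 [hfix]
    abel
  have hAc : (1 - T)⁻¹.mulVec c = uStar := by
    rw [← hc, Matrix.mulVec_mulVec, hinv', Matrix.one_mulVec]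
  have hw : (T.mulVec u + c) - u = c - (1 - T).mulVec u := by
    rw [Matrix.sub_mulVec, Matrix.one_mulVec]
    abel
  have key : (G * H).mulVec ((T.mulVec u + c) - u) = T.mulVec (uStar - u) := by
    rw [hGH, hw, ← Matrix.mulVec_mulVec, Matrix.mulVec_sub, hAc,
      Matrix.mulVec_mulVec, hinv', Matrix.one_mulVec]
  rw [key, Matrix.mulVec_sub]
  conv_rhs => rw [hfix]
  abel
end
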